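/- Convolution of order k is bounded on exponentially weighted spaces: if H, J : ℂ → ℂ satisfy |H(w)| ≤ A·e^{μ^k|w|^k}/(1+μ^{2k}|w|^{2k}) and |J(w)| ≤ B·e^{μ^k|w|^k}/(1+μ^{2k}|w|^{2k}) for all w, then the convolution (H⋆ₖJ)(w) = w∫₀¹ (s(1−s))^{(1−k)/k} H(w(1−s)^{1/k}) J(w s^{1/k}) ds satisfies |(H⋆ₖJ)(w)| ≤ (q_k/μ)·A·B·e^{μ^k|w|^k}/(1+μ^{2k}|w|^{2k}) for all w, where q_k = 2^{(4k−1)/k}·π / (2 cos(π(k−1)/(2k))). -/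

import Mathlib

/-!
Write `a = 1/k` and `x = (μ‖w‖)^k`. At the points `w (1-s)^(1/k)` and `w s^(1/k)` the weights
`e^(x(1-s))` and `e^(xs)` multiply to `e^x`, so the integrand is bounded by `A B e^x φ(s) φ(1-s)`
with `φ(s) = s^(a-1) / (1 + x²s²)`. This kernel is symmetric under `s ↦ 1 - s`, and for
`s ≤ 1/2` the factor `φ(1-s)` is at most `2^(3-a) / (1 + x²)`. Hence the integral over `(0, 1)` is
at most `2^(4-a) / (1 + x²) · ∫₀^∞ φ = 2^(4-a) x^(-a) / (1 + x²) · π / (2 sin(πa/2))`, where the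
last integral is a Beta integral evaluated by the reflection formula. Finally `x^(-a) = 1/(μ‖w‖)`
cancels the prefactor `w`, and `cos(π(k-1)/(2k)) = sin(π/(2k))`.
-/

open Real Set MeasureTheory Complex

theorem integral_rpow_mul_one_sub_rpow_neg {p : ℝ} (hp : 0 < p) (hp1 : p < 1) :
    ∫ t in (0 : ℝ)..1, t ^ (p - 1) * (1 - t) ^ (-p) = π / Real.sin (π * p) := by
  have hbeta : ((∫ t in (0 : ℝ)..1, t ^ (p - 1) * (1 - t) ^ (-p) : ℝ) : ℂ) =
      betaIntegral p (1 - p) := by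
    rw [betaIntegral, ← intervalIntegral.integral_ofReal]
    refine intervalIntegral.integral_congr fun t ht => ?_
    rw [uIcc_of_le zero_le_one] at ht
    push_cast [ofReal_cpow ht.1, ofReal_cpow (sub_nonneg.2 ht.2)]
    ring_nf
  rw [betaIntegral_eq_Gamma_mul_div _ _ (by simpa using hp) (by simpa using hp1),
    add_sub_cancel, Complex.Gamma_one, div_one, Complex.Gamma_mul_Gamma_one_sub] at hbeta
  exact_mod_cast hbeta

theorem sin_pi_mul_div_two_pos {a : ℝ} (ha : 0 < a) (ha2 : a < 2) : 0 < Real.sin (π * a / 2) :=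
  Real.sin_pos_of_pos_of_lt_pi (by positivity) (by nlinarith [pi_pos])

theorem injOn_sq_div_one_add_sq : InjOn (fun u : ℝ => u ^ 2 / (1 + u ^ 2)) (Ioi 0) := by
  intro u hu v hv huv
  have : u ^ 2 = v ^ 2 := by
    field_simp at huv
    linarith
  exact (pow_left_inj₀ hu.out.le hv.out.le two_ne_zero).1 this

theorem image_sq_div_one_add_sq : (fun u : ℝ => u ^ 2 / (1 + u ^ 2)) '' Ioi 0 = Ioo 0 1 := by
  ext t
  constructor
  · rintro ⟨u, hu, rfl⟩
    have : 0 < u ^ 2 := by have := hu.out; positivity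
    exact ⟨by positivity, (div_lt_one (by positivity)).2 (by linarith)⟩
  · rintro ⟨ht0, ht1⟩
    have h1t : 0 < 1 - t := by linarith
    refine ⟨√(t / (1 - t)), Real.sqrt_pos.2 (by positivity), ?_⟩
    simp only [Real.sq_sqrt (div_pos ht0 h1t).le]
    field_simp
    ring

theorem integral_Ioi_rpow_div_one_add_sq {a : ℝ} (ha : 0 < a) (ha2 : a < 2) :
    ∫ u in Ioi (0 : ℝ), u ^ (a - 1) / (1 + u ^ 2) = π / (2 * Real.sin (π * a / 2)) := by
  -- `t = u² / (1 + u²)` turns this into the Beta integral `B(a/2, 1 - a/2)`.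
  set f : ℝ → ℝ := fun u => u ^ 2 / (1 + u ^ 2)
  have hf : ∀ u ∈ Ioi (0 : ℝ), HasDerivWithinAt f (2 * u / (1 + u ^ 2) ^ 2) (Ioi 0) u := by
    intro u _
    refine (((hasDerivAt_pow 2 u).div ((hasDerivAt_pow 2 u).const_add 1)
      (by positivity)).congr_deriv ?_).hasDerivWithinAt
    simp only [Nat.cast_ofNat, Nat.add_one_sub_one, pow_one]
    ring
  have hsubst := integral_image_eq_integral_abs_deriv_smul measurableSet_Ioi hf
    injOn_sq_div_one_add_sq (fun t => t ^ (a / 2 - 1) * (1 - t) ^ (-(a / 2)))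
  rw [image_sq_div_one_add_sq, ← integral_Ioc_eq_integral_Ioo,
    ← intervalIntegral.integral_of_le zero_le_one,
    integral_rpow_mul_one_sub_rpow_neg (by linarith) (by linarith)] at hsubst
  have hintegrand : ∀ u ∈ Ioi (0 : ℝ),
      |2 * u / (1 + u ^ 2) ^ 2| • ((f u) ^ (a / 2 - 1) * (1 - f u) ^ (-(a / 2))) =
        2 * (u ^ (a - 1) / (1 + u ^ 2)) := by
    intro u hu
    have hu : 0 < u := hu
    have h1 : 1 - f u = (1 + u ^ 2)⁻¹ := by simp only [f]; field_simp; ring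
    rw [h1, Real.inv_rpow (by positivity), ← Real.rpow_neg (by positivity), neg_neg]
    simp only [f]
    have hv : 0 < 1 + u ^ 2 := by positivity
    have hu2 : (u ^ 2) ^ (a / 2 - 1) = u ^ (a - 1) / u := by
      rw [← Real.rpow_natCast, ← Real.rpow_mul hu.le, ← Real.rpow_sub_one hu.ne']
      ring_nf
    rw [Real.div_rpow (by positivity) hv.le, hu2, Real.rpow_sub_one hv.ne',
      abs_of_pos (by positivity), smul_eq_mul]
    field_simp
  rw [setIntegral_congr_fun measurableSet_Ioi hintegrand, integral_const_mul] at hsubst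
  rw [show π * a / 2 = π * (a / 2) by ring, mul_comm 2, ← div_div, hsubst]
  ring

theorem integral_Ioi_rpow_div_one_add_mul_sq {a x : ℝ} (ha : 0 < a) (ha2 : a < 2) (hx : 0 < x) :
    ∫ s in Ioi (0 : ℝ), s ^ (a - 1) / (1 + x ^ 2 * s ^ 2) =
      x ^ (-a) * (π / (2 * Real.sin (π * a / 2))) := by
  have hscaled := integral_comp_mul_left_Ioi (fun u => u ^ (a - 1) / (1 + u ^ 2)) 0 hx
  have hintegrand : ∀ s ∈ Ioi (0 : ℝ), (x * s) ^ (a - 1) / (1 + (x * s) ^ 2) =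
      x ^ (a - 1) * (s ^ (a - 1) / (1 + x ^ 2 * s ^ 2)) := fun s hs => by
    rw [Real.mul_rpow hx.le (le_of_lt hs), mul_pow, mul_div_assoc]
  rw [mul_zero, setIntegral_congr_fun measurableSet_Ioi hintegrand, integral_const_mul,
    integral_Ioi_rpow_div_one_add_sq ha ha2, smul_eq_mul, Real.rpow_sub_one hx.ne'] at hscaled
  have : 0 < x ^ a := by positivity
  rw [Real.rpow_neg hx.le]
  field_simp at hscaled ⊢
  linarith

theorem integrableOn_Ioi_rpow_div_one_add_mul_sq {a x : ℝ} (ha : 0 < a) (ha2 : a < 2)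
    (hx : 0 < x) : IntegrableOn (fun s : ℝ => s ^ (a - 1) / (1 + x ^ 2 * s ^ 2)) (Ioi 0) := by
  -- A non-integrable function has integral `0` by convention.
  refine .of_integral_ne_zero ?_
  rw [integral_Ioi_rpow_div_one_add_mul_sq ha ha2 hx]
  have := sin_pi_mul_div_two_pos ha ha2
  positivity

theorem intervalIntegrable_half_one_of_symm {f : ℝ → ℝ} (hf : ∀ s, f (1 - s) = f s)
    (h : IntervalIntegrable f volume 0 (1 / 2)) : IntervalIntegrable f volume (1 / 2) 1 := by
  have h' := (h.comp_sub_left 1).symm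
  norm_num [hf] at h'
  exact h'

theorem integral_zero_one_eq_two_mul_of_symm {f : ℝ → ℝ} (hf : ∀ s, f (1 - s) = f s)
    (h : IntervalIntegrable f volume 0 (1 / 2)) :
    ∫ s in (0 : ℝ)..1, f s = 2 * ∫ s in (0 : ℝ)..(1 / 2), f s := by
  have hreflect := intervalIntegral.integral_comp_sub_left (a := 1 / 2) (b := 1) f 1
  norm_num [hf] at hreflect
  rw [← intervalIntegral.integral_add_adjacent_intervals h
    (intervalIntegrable_half_one_of_symm hf h), hreflect]
  ring

theorem rpow_div_one_add_mul_sq_le_of_half_le {a x t : ℝ} (ha1 : a ≤ 1) (ht : 1 / 2 ≤ t) :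
    t ^ (a - 1) / (1 + x ^ 2 * t ^ 2) ≤ 2 ^ (3 - a) / (1 + x ^ 2) := by
  have hpow : t ^ (a - 1) ≤ 2 ^ (1 - a) := by
    calc t ^ (a - 1) ≤ (1 / 2) ^ (a - 1) :=
          Real.rpow_le_rpow_of_nonpos (by norm_num) ht (by linarith)
      _ = 2 ^ (1 - a) := by
          rw [one_div, Real.inv_rpow zero_le_two, ← Real.rpow_neg zero_le_two, neg_sub]
  have hden : (1 + x ^ 2) / 4 ≤ 1 + x ^ 2 * t ^ 2 := by
    nlinarith [mul_le_mul_of_nonneg_left (show 1 / 4 ≤ t ^ 2 by nlinarith) (sq_nonneg x)]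
  calc t ^ (a - 1) / (1 + x ^ 2 * t ^ 2) ≤ 2 ^ (1 - a) / ((1 + x ^ 2) / 4) :=
        div_le_div₀ (by positivity) hpow (by positivity) hden
    _ = 2 ^ (3 - a) / (1 + x ^ 2) := by
        rw [show 3 - a = 1 - a + 2 by ring, Real.rpow_add zero_lt_two]
        field_simp
        norm_num

noncomputable def convKernel (a x s : ℝ) : ℝ :=
  s ^ (a - 1) / (1 + x ^ 2 * s ^ 2) * ((1 - s) ^ (a - 1) / (1 + x ^ 2 * (1 - s) ^ 2))

section convKernel

variable {a x : ℝ}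

theorem convKernel_one_sub (s : ℝ) : convKernel a x (1 - s) = convKernel a x s := by
  rw [convKernel, convKernel, sub_sub_cancel, mul_comm]

theorem convKernel_le_of_le_half (ha1 : a ≤ 1) {s : ℝ} (hs : s ∈ Ioc (0 : ℝ) (1 / 2)) :
    convKernel a x s ≤ 2 ^ (3 - a) / (1 + x ^ 2) * (s ^ (a - 1) / (1 + x ^ 2 * s ^ 2)) := by
  have : 0 < s := hs.1
  rw [convKernel, mul_comm]
  exact mul_le_mul_of_nonneg_right
    (rpow_div_one_add_mul_sq_le_of_half_le ha1 (by linarith [hs.2])) (by positivity)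

theorem intervalIntegrable_convKernel_zero_half (ha : 0 < a) (ha1 : a ≤ 1) (hx : 0 < x) :
    IntervalIntegrable (convKernel a x) volume 0 (1 / 2) := by
  rw [intervalIntegrable_iff_integrableOn_Ioc_of_le (by norm_num)]
  refine (((integrableOn_Ioi_rpow_div_one_add_mul_sq ha (by linarith) hx).mono_set
    Ioc_subset_Ioi_self).const_mul (2 ^ (3 - a) / (1 + x ^ 2))).mono'
    (by unfold convKernel; fun_prop) ?_
  refine (ae_restrict_iff' measurableSet_Ioc).2 (.of_forall fun s hs => ?_)
  have : 0 < 1 - s := by linarith [hs.2]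
  rw [Real.norm_of_nonneg (by have := hs.1; unfold convKernel; positivity)]
  exact convKernel_le_of_le_half ha1 hs

theorem integrableOn_convKernel (ha : 0 < a) (ha1 : a ≤ 1) (hx : 0 < x) :
    IntegrableOn (convKernel a x) (Ioo 0 1) := by
  have h := intervalIntegrable_convKernel_zero_half ha ha1 hx
  exact ((h.trans (intervalIntegrable_half_one_of_symm convKernel_one_sub h)).1).mono_set
    Ioo_subset_Ioc_self

theorem integral_convKernel_le (ha : 0 < a) (ha1 : a ≤ 1) (hx : 0 < x) :
    ∫ s in Ioo (0 : ℝ) 1, convKernel a x s ≤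
      2 ^ (4 - a) * (π / (2 * Real.sin (π * a / 2))) * (x ^ (-a) / (1 + x ^ 2)) := by
  have hint := intervalIntegrable_convKernel_zero_half ha ha1 hx
  have hφ := integrableOn_Ioi_rpow_div_one_add_mul_sq ha (by linarith) hx
  calc _ = 2 * ∫ s in (0 : ℝ)..(1 / 2), convKernel a x s := by
        rw [← integral_Ioc_eq_integral_Ioo, ← intervalIntegral.integral_of_le zero_le_one,
          integral_zero_one_eq_two_mul_of_symm convKernel_one_sub hint]
    _ ≤ 2 * ∫ s in Ioc (0 : ℝ) (1 / 2),
          2 ^ (3 - a) / (1 + x ^ 2) * (s ^ (a - 1) / (1 + x ^ 2 * s ^ 2)) := by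
        rw [intervalIntegral.integral_of_le (by norm_num)]
        refine mul_le_mul_of_nonneg_left ?_ zero_le_two
        exact setIntegral_mono_on hint.1 ((hφ.mono_set Ioc_subset_Ioi_self).const_mul _)
          measurableSet_Ioc fun s hs => convKernel_le_of_le_half ha1 hs
    _ ≤ 2 * (2 ^ (3 - a) / (1 + x ^ 2) *
          ∫ s in Ioi (0 : ℝ), s ^ (a - 1) / (1 + x ^ 2 * s ^ 2)) := by
        rw [integral_const_mul]
        refine mul_le_mul_of_nonneg_left (mul_le_mul_of_nonneg_left ?_ (by positivity)) zero_le_two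
        refine setIntegral_mono_set hφ ?_ Ioc_subset_Ioi_self.eventuallyLE
        exact (ae_restrict_iff' measurableSet_Ioi).2
          (.of_forall fun s (hs : 0 < s) => by positivity)
    _ = _ := by
        rw [integral_Ioi_rpow_div_one_add_mul_sq ha (by linarith) hx,
          show 4 - a = 3 - a + 1 by ring, Real.rpow_add_one two_ne_zero]
        ring

end convKernel

theorem norm_comp_mul_rpow_le {k : ℕ} (hk : k ≠ 0) {μ A : ℝ} {H : ℂ → ℂ}
    (hH : ∀ w : ℂ, ‖H w‖ ≤ A * Real.exp (μ ^ k * ‖w‖ ^ k) / (1 + μ ^ (2 * k) * ‖w‖ ^ (2 * k)))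
    (w : ℂ) {t : ℝ} (ht : 0 ≤ t) :
    ‖H (w * ((t ^ ((1 : ℝ) / k) : ℝ) : ℂ))‖ ≤
      A * Real.exp (μ ^ k * ‖w‖ ^ k * t) / (1 + (μ ^ k * ‖w‖ ^ k) ^ 2 * t ^ 2) := by
  have hroot : (t ^ ((1 : ℝ) / k)) ^ k = t := by
    rw [one_div, Real.rpow_inv_natCast_pow ht hk]
  have hroot2 : (t ^ ((1 : ℝ) / k)) ^ (2 * k) = t ^ 2 := by rw [pow_mul', hroot]
  have h := hH (w * ((t ^ ((1 : ℝ) / k) : ℝ) : ℂ))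
  rw [norm_mul, Complex.norm_real, Real.norm_of_nonneg (by positivity), mul_pow, mul_pow, hroot,
    hroot2] at h
  rw [pow_mul' μ, pow_mul' ‖w‖] at h
  simpa only [mul_assoc, mul_pow] using h

theorem norm_convIntegrand_le {k : ℕ} (hk : k ≠ 0) {μ A B : ℝ} {H J : ℂ → ℂ}
    (hH : ∀ w : ℂ, ‖H w‖ ≤ A * Real.exp (μ ^ k * ‖w‖ ^ k) / (1 + μ ^ (2 * k) * ‖w‖ ^ (2 * k)))
    (hJ : ∀ w : ℂ, ‖J w‖ ≤ B * Real.exp (μ ^ k * ‖w‖ ^ k) / (1 + μ ^ (2 * k) * ‖w‖ ^ (2 * k)))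
    {w : ℂ} {x : ℝ} (hx : μ ^ k * ‖w‖ ^ k = x) {s : ℝ} (hs : s ∈ Ioo (0 : ℝ) 1) :
    ‖((s * (1 - s)) ^ ((1 : ℝ) / k - 1) : ℝ) •
        (H (w * (((1 - s) ^ ((1 : ℝ) / k) : ℝ) : ℂ)) * J (w * ((s ^ ((1 : ℝ) / k) : ℝ) : ℂ)))‖ ≤
      A * B * Real.exp x * convKernel (1 / k) x s := by
  obtain ⟨hs0, hs1⟩ := hs
  have h1s : 0 < 1 - s := by linarith
  have hH' := norm_comp_mul_rpow_le hk hH w h1s.le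
  have hJ' := norm_comp_mul_rpow_le hk hJ w hs0.le
  rw [hx] at hH' hJ'
  have hexp : Real.exp x = Real.exp (x * (1 - s)) * Real.exp (x * s) := by
    rw [← Real.exp_add]
    ring_nf
  rw [norm_smul, norm_mul, Real.norm_of_nonneg (by positivity), Real.mul_rpow hs0.le h1s.le]
  calc _ ≤ s ^ ((1 : ℝ) / k - 1) * (1 - s) ^ ((1 : ℝ) / k - 1) *
        (A * Real.exp (x * (1 - s)) / (1 + x ^ 2 * (1 - s) ^ 2) *
          (B * Real.exp (x * s) / (1 + x ^ 2 * s ^ 2))) := by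
        have : 0 ≤ s ^ ((1 : ℝ) / k - 1) * (1 - s) ^ ((1 : ℝ) / k - 1) := by positivity
        exact mul_le_mul_of_nonneg_left
          (mul_le_mul hH' hJ' (norm_nonneg _) ((norm_nonneg _).trans hH')) this
    _ = _ := by
        rw [convKernel, hexp]
        ring

theorem norm_integral_convIntegrand_le {k : ℕ} (hk : 1 ≤ k) {μ A B : ℝ} (hA : 0 ≤ A) (hB : 0 ≤ B)
    {H J : ℂ → ℂ}
    (hH : ∀ w : ℂ, ‖H w‖ ≤ A * Real.exp (μ ^ k * ‖w‖ ^ k) / (1 + μ ^ (2 * k) * ‖w‖ ^ (2 * k)))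
    (hJ : ∀ w : ℂ, ‖J w‖ ≤ B * Real.exp (μ ^ k * ‖w‖ ^ k) / (1 + μ ^ (2 * k) * ‖w‖ ^ (2 * k)))
    {w : ℂ} {x : ℝ} (hx : μ ^ k * ‖w‖ ^ k = x) (hxpos : 0 < x) :
    ‖∫ s in Ioo (0 : ℝ) 1, ((s * (1 - s)) ^ ((1 : ℝ) / k - 1) : ℝ) •
        (H (w * (((1 - s) ^ ((1 : ℝ) / k) : ℝ) : ℂ)) * J (w * ((s ^ ((1 : ℝ) / k) : ℝ) : ℂ)))‖ ≤
      A * B * Real.exp x * (2 ^ (4 - 1 / (k : ℝ)) * (π / (2 * Real.sin (π * (1 / k) / 2))) *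
        (x ^ (-(1 / k : ℝ)) / (1 + x ^ 2))) := by
  have hk0 : k ≠ 0 := by omega
  have ha : (0 : ℝ) < 1 / k := by positivity
  have ha1 : (1 : ℝ) / k ≤ 1 := by rw [div_le_one (by positivity)]; exact_mod_cast hk
  calc _ ≤ ∫ s in Ioo (0 : ℝ) 1, A * B * Real.exp x * convKernel (1 / k) x s :=
        norm_integral_le_of_norm_le ((integrableOn_convKernel ha ha1 hxpos).const_mul _)
          ((ae_restrict_iff' measurableSet_Ioo).2
            (.of_forall fun s hs => norm_convIntegrand_le hk0 hH hJ hx hs))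
    _ ≤ _ := by
        rw [integral_const_mul]
        exact mul_le_mul_of_nonneg_left (integral_convKernel_le ha ha1 hxpos) (by positivity)

theorem two_rpow_mul_pi_div_two_cos_eq {k : ℕ} (hk : k ≠ 0) :
    (2 : ℝ) ^ ((4 * (k : ℝ) - 1) / k) * π / (2 * Real.cos (π * ((k : ℝ) - 1) / (2 * k))) =
      2 ^ (4 - 1 / (k : ℝ)) * (π / (2 * Real.sin (π * (1 / k) / 2))) := by
  rw [← Real.cos_pi_div_two_sub]
  field_simp

theorem stmt_8_general (k : ℕ) (hk : 1 ≤ k) (μ A B : ℝ) (hμ : 0 < μ) (hA : 0 ≤ A) (hB : 0 ≤ B)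
    (H J : ℂ → ℂ)
    (hH : ∀ w : ℂ, ‖H w‖ ≤ A * Real.exp (μ ^ k * ‖w‖ ^ k) / (1 + μ ^ (2 * k) * ‖w‖ ^ (2 * k)))
    (hJ : ∀ w : ℂ, ‖J w‖ ≤ B * Real.exp (μ ^ k * ‖w‖ ^ k) / (1 + μ ^ (2 * k) * ‖w‖ ^ (2 * k))) :
    ∀ w : ℂ,
      ‖w * ∫ s in Ioo (0 : ℝ) 1,
          ((s * (1 - s)) ^ (((1 : ℝ) - k) / k) : ℝ) •
            (H (w * (((1 - s) ^ ((1 : ℝ) / k) : ℝ) : ℂ)) *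
             J (w * ((s ^ ((1 : ℝ) / k) : ℝ) : ℂ)))‖ ≤
        ((2 : ℝ) ^ ((4 * (k : ℝ) - 1) / k) * π / (2 * Real.cos (π * ((k : ℝ) - 1) / (2 * k))) / μ)
          * A * B * Real.exp (μ ^ k * ‖w‖ ^ k) / (1 + μ ^ (2 * k) * ‖w‖ ^ (2 * k)) := by
  have hk0 : k ≠ 0 := by omega
  have hsin := sin_pi_mul_div_two_pos (a := 1 / k) (by positivity)
    ((div_le_one (by positivity)).2 (by exact_mod_cast hk) |>.trans_lt one_lt_two)
  have hexp : ((1 : ℝ) - k) / k = 1 / k - 1 := by field_simp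
  intro w
  rw [two_rpow_mul_pi_div_two_cos_eq hk0, hexp]
  rcases eq_or_ne w 0 with rfl | hw
  · rw [zero_mul, norm_zero]
    positivity
  have hw' : 0 < ‖w‖ := norm_pos_iff.2 hw
  set x := μ ^ k * ‖w‖ ^ k with hx
  have hx2 : μ ^ (2 * k) * ‖w‖ ^ (2 * k) = x ^ 2 := by
    rw [hx, mul_pow, ← pow_mul, ← pow_mul, mul_comm k 2]
  -- `x ^ (1 / k) = μ ‖w‖`, so the factor `‖w‖` in front of the integral cancels.
  have hxa : x ^ (-(1 / k : ℝ)) = (μ * ‖w‖)⁻¹ := by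
    rw [Real.rpow_neg (by positivity), hx, ← mul_pow, one_div,
      Real.pow_rpow_inv_natCast (by positivity) hk0]
  rw [norm_mul, hx2]
  calc _ ≤ ‖w‖ * (A * B * Real.exp x * (2 ^ (4 - 1 / (k : ℝ)) *
        (π / (2 * Real.sin (π * (1 / k) / 2))) * (x ^ (-(1 / k : ℝ)) / (1 + x ^ 2)))) :=
        mul_le_mul_of_nonneg_left
          (norm_integral_convIntegrand_le hk hA hB hH hJ hx.symm (by positivity)) hw'.le
    _ = _ := by
        rw [hxa]
        field_simp

/-- Boundedness of the order-`k` convolution on exponentially weighted spaces: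
if `|H(w)| ≤ A e^(μ^k|w|^k)/(1+μ^(2k)|w|^(2k))` and similarly for `J` with constant `B`,
then `|(H ⋆ₖ J)(w)| ≤ (q_k/μ) A B e^(μ^k|w|^k)/(1+μ^(2k)|w|^(2k))`, with
`q_k = 2^((4k−1)/k) π / (2 cos(π(k−1)/(2k)))`. -/
theorem stmt_8 (k : ℕ) (hk : 1 ≤ k) (μ A B : ℝ) (hμ : 0 < μ) (hA : 0 ≤ A) (hB : 0 ≤ B)
    (H J : ℂ → ℂ) (hHc : Continuous H) (hJc : Continuous J)
    (hH : ∀ w : ℂ, ‖H w‖ ≤ A * Real.exp (μ ^ k * ‖w‖ ^ k) / (1 + μ ^ (2 * k) * ‖w‖ ^ (2 * k)))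
    (hJ : ∀ w : ℂ, ‖J w‖ ≤ B * Real.exp (μ ^ k * ‖w‖ ^ k) / (1 + μ ^ (2 * k) * ‖w‖ ^ (2 * k))) :
    ∀ w : ℂ,
      ‖w * ∫ s in Ioo (0 : ℝ) 1,
          ((s * (1 - s)) ^ (((1 : ℝ) - k) / k) : ℝ) •
            (H (w * (((1 - s) ^ ((1 : ℝ) / k) : ℝ) : ℂ)) *
             J (w * ((s ^ ((1 : ℝ) / k) : ℝ) : ℂ)))‖ ≤
        ((2 : ℝ) ^ ((4 * (k : ℝ) - 1) / k) * π / (2 * Real.cos (π * ((k : ℝ) - 1) / (2 * k))) / μ)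
          * A * B * Real.exp (μ ^ k * ‖w‖ ^ k) / (1 + μ ^ (2 * k) * ‖w‖ ^ (2 * k)) :=
  stmt_8_general k hk μ A B hμ hA hB H J hH hJ
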